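/- Let K, n_s, p be positive integers. For each q ∈ {1, …, K} let X^q be a real n_s × p matrix and Y^q ∈ ℝ^{n_s}. Let b̄, b_Lasso ∈ ℝ^p, let M̄ ∈ ℝ and ς̄ ≥ 0, and define ē^q = Y^q − X^q b̄ and Δ = b̄ − b_Lasso. Assume (i) (1/K)·Σ_{q=1}^K (1/n_s)·‖Y^q − X^q b_Lasso‖₂² ≤ M̄ + ς̄, and (ii) ‖b_Lasso‖₁ ≤ ‖b̄‖₁. Then (1/K)·Σ_{q=1}^K (1/n_s)·‖X^q Δ‖₂² ≤ | M̄ − (1/K)·Σ_{q=1}^K (1/n_s)·‖ē^q‖₂² | + (1/K)·Σ_{q=1}^K (4/n_s)·‖(X^q)ᵀ ē^q‖_∞·‖b̄‖₁ + ς̄. -/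
import Mathlib


/-- The squared Euclidean (ℓ2) norm of a vector. -/
noncomputable def l2normSq {m : ℕ} (v : Fin m → ℝ) : ℝ := ∑ i, (v i) ^ 2

/-- The ℓ1 norm of a vector. -/
noncomputable def l1norm {m : ℕ} (v : Fin m → ℝ) : ℝ := ∑ i, |v i|

/-- The ℓ∞ norm of a vector. -/
noncomputable def linftyNorm {m : ℕ} (v : Fin m → ℝ) : ℝ := ⨆ i, |v i|

lemma l2normSq_add {m : ℕ} (u v : Fin m → ℝ) :
    l2normSq (u + v) = l2normSq u + 2 * (∑ i, u i * v i) + l2normSq v := by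
  simp only [l2normSq, Pi.add_apply, add_sq, Finset.sum_add_distrib, Finset.mul_sum]
  ring

lemma abs_dot_le {m : ℕ} (w d : Fin m → ℝ) :
    |∑ i, w i * d i| ≤ linftyNorm w * l1norm d := by
  calc |∑ i, w i * d i| ≤ ∑ i, |w i * d i| := Finset.abs_sum_le_sum_abs _ _
    _ ≤ ∑ i, linftyNorm w * |d i| := by
        refine Finset.sum_le_sum fun i _ => ?_
        rw [abs_mul]
        refine mul_le_mul_of_nonneg_right ?_ (abs_nonneg _)
        show |w i| ≤ ⨆ j, |w j|
        exact le_ciSup (f := fun j => |w j|) (Set.Finite.bddAbove (Set.finite_range _)) i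
    _ = linftyNorm w * l1norm d := by rw [l1norm, Finset.mul_sum]

lemma linftyNorm_nonneg {m : ℕ} [NeZero m] (w : Fin m → ℝ) : 0 ≤ linftyNorm w :=
  le_trans (abs_nonneg (w 0))
    (le_ciSup (f := fun j => |w j|) (Set.Finite.bddAbove (Set.finite_range _)) 0)

/-- deterministic content of Corollary 2: the K-fold cross-validation bound
for the averaged squared prediction distance between the worst-case extremum estimator `b̄`
and the Lasso estimator. -/
theorem lasso_cv_prediction_bound
    (K ns p : ℕ) (hK : 0 < K) (hns : 0 < ns) (hp : 0 < p)
    (X : Fin K → Matrix (Fin ns) (Fin p) ℝ) (Y : Fin K → Fin ns → ℝ)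
    (bbar bLasso : Fin p → ℝ) (M ςbar : ℝ) (hς : 0 ≤ ςbar)
    (ebar : Fin K → Fin ns → ℝ) (hebar : ∀ q, ebar q = Y q - (X q).mulVec bbar)
    (Δ : Fin p → ℝ) (hΔ : Δ = bbar - bLasso)
    (h1 : (1 / (K : ℝ)) * ∑ q, (1 / (ns : ℝ)) * l2normSq (Y q - (X q).mulVec bLasso)
            ≤ M + ςbar)
    (h2 : l1norm bLasso ≤ l1norm bbar) :
    (1 / (K : ℝ)) * ∑ q, (1 / (ns : ℝ)) * l2normSq ((X q).mulVec Δ)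
      ≤ |M - (1 / (K : ℝ)) * ∑ q, (1 / (ns : ℝ)) * l2normSq (ebar q)|
        + (1 / (K : ℝ)) * ∑ q, (4 / (ns : ℝ)) * linftyNorm ((X q).transpose.mulVec (ebar q))
            * l1norm bbar
        + ςbar := by
  have : NeZero p := ⟨hp.ne'⟩
  have hKpos : (0:ℝ) < K := by exact_mod_cast hK
  have hnspos : (0:ℝ) < ns := by exact_mod_cast hns
  -- decomposition Y - X bLasso = ebar + X Δ
  have hdecomp : ∀ q, Y q - (X q).mulVec bLasso = ebar q + (X q).mulVec Δ := by
    intro q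
    rw [hebar q, hΔ, Matrix.mulVec_sub]
    abel
  -- inner product rewrite
  have hdot : ∀ q, (∑ i, ebar q i * (X q).mulVec Δ i)
      = ∑ j, ((X q).transpose.mulVec (ebar q)) j * Δ j := by
    intro q
    have := Matrix.dotProduct_mulVec (ebar q) (X q) Δ
    simpa [dotProduct, Matrix.vecMul_transpose, Matrix.mulVec_transpose] using this
  -- l1 bound on Δ
  have hΔ1 : l1norm Δ ≤ 2 * l1norm bbar := by
    have : l1norm Δ ≤ l1norm bbar + l1norm bLasso := by
      rw [hΔ]
      simp only [l1norm, Pi.sub_apply]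
      rw [← Finset.sum_add_distrib]
      exact Finset.sum_le_sum fun j _ => abs_sub (bbar j) (bLasso j)
    linarith
  -- cross-term bound per q
  have hcross : ∀ q, |∑ i, ebar q i * (X q).mulVec Δ i|
      ≤ linftyNorm ((X q).transpose.mulVec (ebar q)) * (2 * l1norm bbar) := by
    intro q
    rw [hdot q]
    calc |∑ j, ((X q).transpose.mulVec (ebar q)) j * Δ j|
        ≤ linftyNorm ((X q).transpose.mulVec (ebar q)) * l1norm Δ := abs_dot_le _ _
      _ ≤ _ := mul_le_mul_of_nonneg_left hΔ1 (linftyNorm_nonneg _)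
  -- pointwise expansion
  have hexp : ∀ q, l2normSq (Y q - (X q).mulVec bLasso)
      = l2normSq (ebar q) + 2 * (∑ i, ebar q i * (X q).mulVec Δ i)
        + l2normSq ((X q).mulVec Δ) := by
    intro q; rw [hdecomp q, l2normSq_add]
  -- main chain
  set S := (1 / (K : ℝ)) * ∑ q, (1 / (ns : ℝ)) * l2normSq ((X q).mulVec Δ) with hS
  set E := (1 / (K : ℝ)) * ∑ q, (1 / (ns : ℝ)) * l2normSq (ebar q) with hE
  set C := (1 / (K : ℝ)) * ∑ q, (1 / (ns : ℝ)) * (∑ i, ebar q i * (X q).mulVec Δ i) with hC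
  have hsum : (1 / (K : ℝ)) * ∑ q, (1 / (ns : ℝ)) * l2normSq (Y q - (X q).mulVec bLasso)
      = E + 2 * C + S := by
    have step1 : (1 / (K : ℝ)) * ∑ q, (1 / (ns : ℝ)) * l2normSq (Y q - (X q).mulVec bLasso)
        = (1 / (K : ℝ)) * ∑ q, ((1 / (ns : ℝ)) * l2normSq (ebar q)
            + 2 * ((1 / (ns : ℝ)) * ∑ i, ebar q i * (X q).mulVec Δ i)
            + (1 / (ns : ℝ)) * l2normSq ((X q).mulVec Δ)) := by
      congr 1
      exact Finset.sum_congr rfl fun q _ => by rw [hexp q]; ring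
    rw [step1, hE, hC, hS]
    simp only [Finset.sum_add_distrib, ← Finset.mul_sum]
    ring
  have hSle : S ≤ M + ςbar - E - 2 * C := by linarith [hsum ▸ h1]
  have hCbound : -(2 * C) ≤ (1 / (K : ℝ)) * ∑ q,
      (4 / (ns : ℝ)) * linftyNorm ((X q).transpose.mulVec (ebar q)) * l1norm bbar := by
    have key : -(2 * C) = ∑ q, (2 / ((K : ℝ) * ns)) * (-(∑ i, ebar q i * (X q).mulVec Δ i)) := by
      rw [hC, Finset.mul_sum, Finset.mul_sum, ← Finset.sum_neg_distrib]
      exact Finset.sum_congr rfl fun q _ => by ring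
    rw [key, Finset.mul_sum]
    refine Finset.sum_le_sum fun q _ => ?_
    have habs : -(∑ i, ebar q i * (X q).mulVec Δ i)
        ≤ linftyNorm ((X q).transpose.mulVec (ebar q)) * (2 * l1norm bbar) :=
      le_trans (neg_le_abs _) (hcross q)
    have hpos : (0:ℝ) < 2 / ((K : ℝ) * ns) := by positivity
    calc (2 / ((K : ℝ) * ns)) * (-(∑ i, ebar q i * (X q).mulVec Δ i))
        ≤ (2 / ((K : ℝ) * ns)) *
            (linftyNorm ((X q).transpose.mulVec (ebar q)) * (2 * l1norm bbar)) :=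
          mul_le_mul_of_nonneg_left habs hpos.le
      _ = (1 / (K : ℝ)) * ((4 / (ns : ℝ)) * linftyNorm ((X q).transpose.mulVec (ebar q))
            * l1norm bbar) := by
          field_simp
          ring
  have hME : M - E ≤ |M - E| := le_abs_self _
  linarith [hSle, hCbound, hME]
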